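/- For all ℓ, m ∈ ℤ and λ, μ ∈ ℝ/ℤ, the Verlinde coefficient N_{(ℓ,λ),(m,μ)}^{(n,ν)} computed from the kernels S[(ℓ,λ),(r,ρ)] = (−1)^{ℓ+r} e^{−2πi(ℓρ + rλ)} and S_vac[(r,ρ)] = (−1)^{r+1} e^{−πiρ}/(e^{iπρ} − e^{−iπρ}) by the Verlinde formula N = ∑_{r ∈ ℤ} ∫_{ℝ/ℤ} S[(ℓ,λ),(r,ρ)] S[(m,μ),(r,ρ)] conj(S[(n,ν),(r,ρ)]) / S_vac[(r,ρ)] dρ, equals (δ_{n, ℓ+m} + δ_{n, ℓ+m−1}) δ(ν = λ+μ mod 1). In particular all Verlinde coefficients are non-negative integer multiples of delta functions. -/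
import Mathlib


open Complex Real

/- The Verlinde formula for the c = 2 bosonic ghosts.  With the standard
   S-kernel S[(ℓ,λ),(r,ρ)] = (−1)^{ℓ+r} e^{−2πi(ℓρ+rλ)} and the vacuum kernel
   S_vac[(r,ρ)] = (−1)^{r+1} e^{−iπρ}/(e^{iπρ} − e^{−iπρ}), whose reciprocal
   is the honest function 1/S_vac[(r,ρ)] = (−1)^{r+1} e^{iπρ}(e^{iπρ}−e^{−iπρ}),
   the ρ-integral in the Verlinde formula
   N = ∑_r ∫ S[(ℓ,λ),(r,ρ)] S[(m,μ),(r,ρ)] conj(S[(n,ν),(r,ρ)]) / S_vac[(r,ρ)] dρ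
   evaluates, for each fixed r, to (δ_{n,ℓ+m} + δ_{n,ℓ+m−1}) e^{−2πi(λ+μ−ν)r};
   summing over r then gives (δ_{n,ℓ+m} + δ_{n,ℓ+m−1}) δ(ν = λ+μ mod 1):
   in particular, if λ+μ−ν ∈ ℤ then each r-term equals δ_{n,ℓ+m} + δ_{n,ℓ+m−1},
   a non-negative integer. -/

noncomputable def Sker (ℓ : ℤ) (lam : ℝ) (r : ℤ) (rho : ℝ) : ℂ :=
  (-1 : ℂ) ^ (ℓ + r) * Complex.exp (-2 * π * I * (ℓ * rho + r * lam))

/-- The reciprocal of the vacuum S-kernel (the formal geometric series for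
    1/(e^{iπρ} − e^{−iπρ}) resums to an honest reciprocal here). -/
noncomputable def SvacInv (r : ℤ) (rho : ℝ) : ℂ :=
  (-1 : ℂ) ^ (r + 1) * Complex.exp (π * I * rho) *
    (Complex.exp (π * I * rho) - Complex.exp (-π * I * rho))

/-- ∫₀¹ e^{2πikρ} dρ = δ_{k,0}. -/
lemma exp_int_integral (k : ℤ) :
    (∫ rho in (0:ℝ)..1, Complex.exp (2*π*I*k*rho)) = if k = 0 then 1 else 0 := by
  by_cases hk : k = 0
  · simp [hk]
  · have hc : (2*π*I*k : ℂ) ≠ 0 := by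
      simp [Real.pi_ne_zero, Complex.I_ne_zero, hk]
    rw [if_neg hk]
    have h := integral_exp_mul_complex (a := 0) (b := 1) hc
    rw [h]
    have h1 : Complex.exp (2*π*I*k*(1:ℝ)) = 1 := by
      have := Complex.exp_int_mul_two_pi_mul_I k
      rw [← this]; push_cast; ring_nf
    have h0 : Complex.exp (2*π*I*k*(0:ℝ)) = 1 := by
      push_cast; rw [mul_zero, Complex.exp_zero]
    rw [h1, h0]; simp

/-- Pointwise simplification of the Verlinde integrand. -/
lemma integrand_eq (ℓ m n r : ℤ) (lam mu nu : ℝ) (rho : ℝ) :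
    Sker ℓ lam r rho * Sker m mu r rho * (starRingEnd ℂ) (Sker n nu r rho) * SvacInv r rho
    = (-1:ℂ)^(ℓ+m+n+1) * Complex.exp (-2*π*I*r*(lam+mu-nu)) *
      (Complex.exp (2*π*I*((n - ℓ - m + 1 : ℤ) : ℂ)*rho)
        - Complex.exp (2*π*I*((n - ℓ - m : ℤ) : ℂ)*rho)) := by
  have harg : (starRingEnd ℂ) (-2 * (π:ℂ) * I * ((n:ℂ) * (rho:ℂ) + (r:ℂ) * (nu:ℂ)))
      = 2 * π * I * ((n:ℂ) * rho + r * nu) := by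
    simp only [map_mul, map_add, map_neg, Complex.conj_I, map_ofNat, map_intCast,
      Complex.conj_ofReal]
    ring
  have hconj : (starRingEnd ℂ) (Sker n nu r rho)
      = (-1:ℂ)^(n+r) * Complex.exp (2*π*I*((n:ℂ)*rho + r*nu)) := by
    rw [Sker, map_mul, ← Complex.exp_conj, harg, map_zpow₀, map_neg, map_one]
  have hsign : (-1:ℂ)^(ℓ+r) * (-1:ℂ)^(m+r) * (-1:ℂ)^(n+r) * (-1:ℂ)^(r+1)
      = (-1:ℂ)^(ℓ+m+n+1) := by
    rw [← zpow_add₀ (by norm_num : (-1:ℂ) ≠ 0), ← zpow_add₀ (by norm_num : (-1:ℂ) ≠ 0),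
        ← zpow_add₀ (by norm_num : (-1:ℂ) ≠ 0)]
    have h2 : ℓ + r + (m + r) + (n + r) + (r + 1) = ℓ + m + n + 1 + 2*(2*r) := by ring
    rw [h2, zpow_add₀ (by norm_num : (-1:ℂ) ≠ 0), zpow_mul]
    norm_num
  have hexp : Complex.exp (-2 * π * I * ((ℓ:ℂ) * rho + r * lam)) *
      Complex.exp (-2 * π * I * ((m:ℂ) * rho + r * mu)) *
      Complex.exp (2*π*I*((n:ℂ)*rho + r*nu)) * Complex.exp (π * I * rho) *
      (Complex.exp (π * I * rho) - Complex.exp (-π * I * rho))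
      = Complex.exp (-2*π*I*r*(lam+mu-nu)) *
        (Complex.exp (2*π*I*((n - ℓ - m + 1 : ℤ) : ℂ)*rho)
          - Complex.exp (2*π*I*((n - ℓ - m : ℤ) : ℂ)*rho)) := by
    rw [mul_sub, mul_sub]
    simp only [← Complex.exp_add]
    congr 2 <;> push_cast <;> ring
  calc Sker ℓ lam r rho * Sker m mu r rho * (starRingEnd ℂ) (Sker n nu r rho) * SvacInv r rho
      = ((-1:ℂ)^(ℓ+r) * (-1:ℂ)^(m+r) * (-1:ℂ)^(n+r) * (-1:ℂ)^(r+1)) *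
        (Complex.exp (-2 * π * I * ((ℓ:ℂ) * rho + r * lam)) *
         Complex.exp (-2 * π * I * ((m:ℂ) * rho + r * mu)) *
         Complex.exp (2*π*I*((n:ℂ)*rho + r*nu)) * Complex.exp (π * I * rho) *
         (Complex.exp (π * I * rho) - Complex.exp (-π * I * rho))) := by
        rw [hconj]; simp only [Sker, SvacInv]; ring
    _ = _ := by rw [hsign, hexp]; ring

theorem verlinde_coefficients (ℓ m n r : ℤ) (lam mu nu : ℝ) :
    (∫ rho in (0:ℝ)..1,
        Sker ℓ lam r rho * Sker m mu r rho * (starRingEnd ℂ) (Sker n nu r rho) *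
          SvacInv r rho) =
      ((if n = ℓ + m then 1 else 0) + (if n = ℓ + m - 1 then 1 else 0)) *
        Complex.exp (-2 * π * I * r * (lam + mu - nu)) ∧
    ((∃ k : ℤ, lam + mu - nu = (k : ℝ)) →
      (∫ rho in (0:ℝ)..1,
          Sker ℓ lam r rho * Sker m mu r rho * (starRingEnd ℂ) (Sker n nu r rho) *
            SvacInv r rho) =
        ((if n = ℓ + m then 1 else 0) + (if n = ℓ + m - 1 then 1 else 0))) := by
  have hi : ∀ k : ℤ, IntervalIntegrable (fun rho : ℝ => Complex.exp (2*π*I*(k:ℂ)*rho))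
      MeasureTheory.volume 0 1 := by
    intro k
    exact (Continuous.intervalIntegrable (by continuity) 0 1)
  have hmain : (∫ rho in (0:ℝ)..1,
        Sker ℓ lam r rho * Sker m mu r rho * (starRingEnd ℂ) (Sker n nu r rho) *
          SvacInv r rho) =
      ((if n = ℓ + m then 1 else 0) + (if n = ℓ + m - 1 then 1 else 0)) *
        Complex.exp (-2 * π * I * r * (lam + mu - nu)) := by
    have h1 : (∫ rho in (0:ℝ)..1,
        Sker ℓ lam r rho * Sker m mu r rho * (starRingEnd ℂ) (Sker n nu r rho) *
          SvacInv r rho) =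
        ∫ rho in (0:ℝ)..1, (-1:ℂ)^(ℓ+m+n+1) * Complex.exp (-2*π*I*r*(lam+mu-nu)) *
          (Complex.exp (2*π*I*((n - ℓ - m + 1 : ℤ) : ℂ)*rho)
            - Complex.exp (2*π*I*((n - ℓ - m : ℤ) : ℂ)*rho)) := by
      apply intervalIntegral.integral_congr
      intro rho _
      exact integrand_eq ℓ m n r lam mu nu rho
    rw [h1, intervalIntegral.integral_const_mul,
        intervalIntegral.integral_sub (hi _) (hi _), exp_int_integral, exp_int_integral]
    by_cases hn1 : n = ℓ + m
    · have hodd : (-1:ℂ)^(ℓ+m+n+1) = -1 := by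
        rw [hn1]
        have h2 : ℓ + m + (ℓ + m) + 1 = 2*(ℓ+m) + 1 := by ring
        rw [h2, zpow_add₀ (by norm_num : (-1:ℂ) ≠ 0), zpow_mul]
        norm_num
      have e1 : ¬ (n - ℓ - m + 1 = 0) := by omega
      have e2 : n - ℓ - m = 0 := by omega
      have e3 : ¬ (n = ℓ + m - 1) := by omega
      rw [hodd, if_neg e1, if_pos e2, if_pos hn1, if_neg e3]
      ring
    · by_cases hn2 : n = ℓ + m - 1
      · have heven : (-1:ℂ)^(ℓ+m+n+1) = 1 := by
          rw [hn2]
          have h2 : ℓ + m + (ℓ + m - 1) + 1 = 2*(ℓ+m) := by ring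
          rw [h2, zpow_mul]
          norm_num
        have e1 : n - ℓ - m + 1 = 0 := by omega
        have e2 : ¬ (n - ℓ - m = 0) := by omega
        rw [heven, if_pos e1, if_neg e2, if_neg hn1, if_pos hn2]
        ring
      · have e1 : ¬ (n - ℓ - m + 1 = 0) := by omega
        have e2 : ¬ (n - ℓ - m = 0) := by omega
        rw [if_neg e1, if_neg e2, if_neg hn1, if_neg hn2]
        ring
  refine ⟨hmain, ?_⟩
  rintro ⟨k, hk⟩
  rw [hmain]
  have hc : ((lam:ℂ) + mu - nu) = ((k:ℝ):ℂ) := by exact_mod_cast congrArg (Complex.ofReal) hk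
  rw [hc]
  have : Complex.exp (-2 * π * I * r * ((k:ℝ):ℂ)) = 1 := by
    have h := Complex.exp_int_mul_two_pi_mul_I (-(r*k))
    rw [← h]
    congr 1
    push_cast
    ring
  rw [this, mul_one]
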